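/- arXiv:1901.08428 — 2 statements merged into one kernel-verified Lean document; each statement's English description precedes it below -/
import Mathlib

section
/- The matrix exponential exp : 𝔰𝔬(n) → SO(n) is surjective: every special orthogonal matrix B ∈ SO(n) equals exp(A) for some real skew-symmetric matrix A. -/
/-!
An orthogonal `B` commutes with the symmetric matrix `B + Bᵀ`, so after an orthogonal change
of basis diagonalising `B + Bᵀ`, `B` is block diagonal along the eigenspaces of `B + Bᵀ`. On
the eigenspace for the eigenvalue `2μ` the block `X` satisfies `X + Xᵀ = 2μ` and `XᵀX = 1`, so
`K = X - μ` is skew with `K² = μ² - 1`. For `|μ| < 1`, `J = K / √(1 - μ²)` is a complex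
structure and `X = cos θ + sin θ J = exp (θ J)` with `θ = arccos μ`; for `μ = 1` the block is
`1`. For `μ = -1` the block is `-1 = exp (π J)` for any complex structure `J`, which exists
because this block has even size: every other block is an exponential, hence has positive
determinant, while `det B = 1`.
-/

open NormedSpace Matrix

namespace Matrix

section Skew

variable {ι : Type*} [Fintype ι]

-- `exp` on matrices is taken for the product topology, while `map_exp` needs a normed algebra:
-- it is applied under the operator norm and its result is read back up to defeq.
open scoped Norms.Operator in
theorem exp_smul_of_mul_self_eq_neg_one [DecidableEq ι] {X : Matrix ι ι ℝ} (hX : X * X = -1)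
    (t : ℝ) : exp (t • X) = Real.cos t • 1 + Real.sin t • X := by
  let ψ : ℂ →ₐ[ℝ] Matrix ι ι ℝ := Complex.liftAux X hX
  have hψ : t • X = ψ (t * Complex.I) := by simp [ψ, Complex.liftAux_apply]
  rw [hψ]
  refine (map_exp ψ ψ.toLinearMap.continuous_of_finiteDimensional _).symm.trans ?_
  rw [← Complex.exp_eq_exp_ℂ, Complex.liftAux_apply, Complex.exp_ofReal_mul_I_re,
    Complex.exp_ofReal_mul_I_im, Algebra.algebraMap_eq_smul_one]

theorem det_exp_pos [DecidableEq ι] (A : Matrix ι ι ℝ) : 0 < (exp A).det := by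
  have hhalf : exp A = exp ((2⁻¹ : ℝ) • A) * exp ((2⁻¹ : ℝ) • A) := by
    rw [← Matrix.exp_add_of_commute _ _ (Commute.refl _), ← add_smul]
    norm_num
  have hunit : IsUnit (exp ((2⁻¹ : ℝ) • A)) := Matrix.isUnit_exp _
  have hne : (exp ((2⁻¹ : ℝ) • A)).det ≠ 0 := ((isUnit_iff_isUnit_det _).mp hunit).ne_zero
  rw [hhalf, det_mul]
  exact mul_self_pos.mpr hne

theorem exists_transpose_eq_neg_and_mul_self_eq_neg_one [DecidableEq ι]
    (h : Even (Fintype.card ι)) : ∃ J : Matrix ι ι ℝ, Jᵀ = -J ∧ J * J = -1 := by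
  obtain ⟨k, hk⟩ := h
  let e : Fin k ⊕ Fin k ≃ ι := Fintype.equivOfCardEq (by simp [hk])
  let J₀ : Matrix (Fin k ⊕ Fin k) (Fin k ⊕ Fin k) ℝ := fromBlocks 0 (-1) 1 0
  have hJ₀ : J₀ᵀ = -J₀ := by simp [J₀, fromBlocks_transpose, fromBlocks_neg]
  have hJ₀J₀ : J₀ * J₀ = -1 := by
    simp [J₀, fromBlocks_multiply, ← fromBlocks_one, fromBlocks_neg]
  refine ⟨reindexAlgEquiv ℝ ℝ e J₀, ?_, ?_⟩
  · rw [coe_reindexAlgEquiv, transpose_reindex, hJ₀]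
    rfl
  · rw [← map_mul, hJ₀J₀, map_neg, map_one]

theorem nonpos_of_transpose_eq_neg_of_mul_self_eq_smul_one [DecidableEq ι] [Nonempty ι]
    {K : Matrix ι ι ℝ} (hK : Kᵀ = -K) {t : ℝ} (hKK : K * K = t • 1) : t ≤ 0 := by
  obtain ⟨i⟩ := ‹Nonempty ι›
  have h : (Kᵀ * K) i i = -t := by simp [hK, hKK]
  simp only [mul_apply, transpose_apply] at h
  linarith [Finset.sum_nonneg fun j (_ : j ∈ Finset.univ) => mul_self_nonneg (K j i)]

theorem eq_zero_of_transpose_eq_neg_of_mul_self_eq_zero {K : Matrix ι ι ℝ} (hK : Kᵀ = -K)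
    (hKK : K * K = 0) : K = 0 := by
  rw [← conjTranspose_mul_self_eq_zero, conjTranspose_eq_transpose_of_trivial, hK, neg_mul, hKK,
    neg_zero]

end Skew

section Block

variable {ι : Type*} [DecidableEq ι] {X : Matrix ι ι ℝ} {c : ℝ}

theorem transpose_sub_half_smul_one (hc : X + Xᵀ = c • 1) :
    (X - (c / 2) • 1)ᵀ = -(X - (c / 2) • 1) := by
  rw [transpose_sub, transpose_smul, transpose_one, eq_sub_of_add_eq' hc]
  module

theorem sub_half_smul_one_mul_self [Fintype ι] (hX : Xᵀ * X = 1) (hc : X + Xᵀ = c • 1) :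
    (X - (c / 2) • 1) * (X - (c / 2) • 1) = ((c / 2) ^ 2 - 1) • 1 := by
  rw [eq_sub_of_add_eq' hc, sub_mul, smul_mul, one_mul] at hX
  have hXX : X * X = c • X - 1 := by rw [← hX]; abel
  simp only [sub_mul, mul_sub, Matrix.smul_mul, Matrix.mul_smul, one_mul, mul_one, hXX]
  module

theorem eq_neg_one_of_add_transpose_eq_neg_two [Fintype ι] (hX : Xᵀ * X = 1)
    (hc : X + Xᵀ = (-2 : ℝ) • 1) : X = -1 := by
  have hK := eq_zero_of_transpose_eq_neg_of_mul_self_eq_zero (transpose_sub_half_smul_one hc)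
    (by rw [sub_half_smul_one_mul_self hX hc]; norm_num)
  rw [sub_eq_zero] at hK
  rw [hK]
  norm_num

theorem exists_skew_exp_eq_of_add_transpose_eq_smul_one [Fintype ι] (hX : Xᵀ * X = 1)
    (hc : X + Xᵀ = c • 1) (h : c ≠ -2 ∨ Even (Fintype.card ι)) :
    ∃ A : Matrix ι ι ℝ, Aᵀ = -A ∧ exp A = X := by
  rcases isEmpty_or_nonempty ι with hι | hι
  · exact ⟨0, by simp, Subsingleton.elim _ _⟩
  set μ := c / 2 with hμ
  set K := X - μ • 1 with hK_def
  have hK : Kᵀ = -K := transpose_sub_half_smul_one hc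
  have hKK : K * K = (μ ^ 2 - 1) • 1 := sub_half_smul_one_mul_self hX hc
  have hX_eq : X = μ • 1 + K := by rw [hK_def]; abel
  rcases (nonpos_of_transpose_eq_neg_of_mul_self_eq_smul_one hK hKK).lt_or_eq with hlt | heq
  · have hs : 0 < √(1 - μ ^ 2) := Real.sqrt_pos.2 (by linarith)
    have hJJ : ((√(1 - μ ^ 2))⁻¹ • K) * ((√(1 - μ ^ 2))⁻¹ • K) = -1 := by
      have hs2 : (√(1 - μ ^ 2))⁻¹ * (√(1 - μ ^ 2))⁻¹ * (μ ^ 2 - 1) = -1 := by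
        have : 1 - μ ^ 2 ≠ 0 := by linarith
        rw [← mul_inv, Real.mul_self_sqrt (by linarith)]
        field_simp
        ring
      rw [Matrix.smul_mul, Matrix.mul_smul, hKK, smul_smul, smul_smul, hs2, neg_one_smul]
    refine ⟨Real.arccos μ • (√(1 - μ ^ 2))⁻¹ • K, ?_, ?_⟩
    · rw [transpose_smul, transpose_smul, hK, smul_neg, smul_neg]
    · rw [exp_smul_of_mul_self_eq_neg_one hJJ, Real.cos_arccos (by nlinarith) (by nlinarith),
        Real.sin_arccos, smul_smul, mul_inv_cancel₀ hs.ne', one_smul, hX_eq]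
  · have hK0 : K = 0 := eq_zero_of_transpose_eq_neg_of_mul_self_eq_zero hK (by simp [hKK, heq])
    rcases sq_eq_one_iff.1 (sub_eq_zero.1 heq) with h1 | h1
    · exact ⟨0, by simp, by simp [hX_eq, hK0, h1]⟩
    · obtain ⟨J, hJ, hJJ⟩ := exists_transpose_eq_neg_and_mul_self_eq_neg_one
        (h.resolve_left (not_not.2 (by linarith)))
      refine ⟨Real.pi • J, by rw [transpose_smul, hJ, smul_neg], ?_⟩
      rw [exp_smul_of_mul_self_eq_neg_one hJJ, Real.cos_pi, Real.sin_pi, hX_eq, hK0, h1]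
      simp

end Block

section BlockDiagonal

variable {m β α : Type*} {f : m → β}

theorem reindex_blockDiagonal'_toSquareBlock [DecidableEq β] [Zero α] {M : Matrix m m α}
    (hM : ∀ i j, f i ≠ f j → M i j = 0) :
    reindex (Equiv.sigmaFiberEquiv f) (Equiv.sigmaFiberEquiv f)
      (blockDiagonal' (M.toSquareBlock f)) = M := by
  rw [← Equiv.eq_symm_apply]
  ext ⟨a, i⟩ ⟨b, j⟩
  obtain rfl | hab := eq_or_ne a b
  · simp [blockDiagonal'_apply_eq, toSquareBlock_def]
  · simp [blockDiagonal'_apply_ne _ _ _ hab, hM i j (by rw [i.2, j.2]; exact hab)]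

theorem toSquareBlock_mul [DecidableEq β] [Fintype m] [NonUnitalNonAssocSemiring α]
    {M : Matrix m m α} (hM : ∀ i j, f i ≠ f j → M i j = 0) (N : Matrix m m α) (b : β) :
    (M * N).toSquareBlock f b = M.toSquareBlock f b * N.toSquareBlock f b := by
  ext i j
  simp only [toSquareBlock_def, mul_apply, of_apply]
  have hout : ∑ k : {k // ¬f k = b}, M i k * N k j = 0 :=
    Finset.sum_eq_zero fun k _ => by rw [hM i k (by rw [i.2]; exact Ne.symm k.2), zero_mul]
  rw [← Fintype.sum_subtype_add_sum_subtype (fun k => f k = b), hout, add_zero]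

theorem toSquareBlock_one [Zero α] [One α] [DecidableEq m] (b : β) :
    (1 : Matrix m m α).toSquareBlock f b = 1 := by
  ext i j
  simp [toSquareBlock_def, one_apply, Subtype.ext_iff]

theorem BlockTriangular.det_toSquareBlock_pos {R : Type*} [CommRing R] [LinearOrder R]
    [IsStrictOrderedRing R] [Fintype m] [DecidableEq m] [DecidableEq β] [Fintype β]
    [LinearOrder β] {M : Matrix m m R} (hM : M.BlockTriangular f) (hdet : 0 < M.det) {b₀ : β}
    (h : ∀ b ≠ b₀, 0 < (M.toSquareBlock f b).det) : 0 < (M.toSquareBlock f b₀).det := by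
  rw [hM.det_fintype, ← Finset.mul_prod_erase _ _ (Finset.mem_univ b₀)] at hdet
  exact (pos_iff_pos_of_mul_pos hdet).2
    (Finset.prod_pos fun b hb => h b (Finset.ne_of_mem_erase hb))

theorem exists_skew_exp_eq_of_toSquareBlock [Fintype m] [DecidableEq m] [DecidableEq β]
    [Fintype β] {M : Matrix m m ℝ} (hM : ∀ i j, f i ≠ f j → M i j = 0)
    (h : ∀ b, ∃ A : Matrix {i // f i = b} {i // f i = b} ℝ,
      Aᵀ = -A ∧ exp A = M.toSquareBlock f b) :
    ∃ A : Matrix m m ℝ, Aᵀ = -A ∧ exp A = M := by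
  choose A hA hexp using h
  let ρ := reindexAlgEquiv ℝ ℝ (Equiv.sigmaFiberEquiv f)
  have hρ : exp (ρ (blockDiagonal' A)) = ρ (exp (blockDiagonal' A)) :=
    (open scoped Norms.Operator in map_exp ρ (continuous_id.matrix_reindex _ _) _).symm
  have hPi : exp A = fun b => exp (A b) := open scoped Norms.Operator in Pi.exp_def A
  have hskew : (blockDiagonal' A)ᵀ = -blockDiagonal' A := by
    rw [blockDiagonal'_transpose, ← blockDiagonal'_neg]
    exact congrArg blockDiagonal' (funext hA)
  refine ⟨ρ (blockDiagonal' A), ?_, ?_⟩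
  · rw [coe_reindexAlgEquiv, transpose_reindex, hskew]
    rfl
  · rw [hρ, exp_blockDiagonal', hPi, funext hexp, coe_reindexAlgEquiv,
      reindex_blockDiagonal'_toSquareBlock hM]

end BlockDiagonal

section Orthogonal

variable {m : Type*} [Fintype m] [DecidableEq m]

theorem IsSymm.exists_transpose_mul_mul_eq_diagonal {S : Matrix m m ℝ} (hS : S.IsSymm) :
    ∃ U : Matrix m m ℝ, Uᵀ * U = 1 ∧ ∃ v, Uᵀ * S * U = diagonal v := by
  have hS' : S.IsHermitian := by rw [IsHermitian, conjTranspose_eq_transpose_of_trivial, hS]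
  have hstar : star (hS'.eigenvectorUnitary : Matrix m m ℝ) = (hS'.eigenvectorUnitary)ᵀ :=
    conjTranspose_eq_transpose_of_trivial _
  refine ⟨hS'.eigenvectorUnitary, hstar ▸ Unitary.coe_star_mul_self _, hS'.eigenvalues, ?_⟩
  have h := hS'.conjStarAlgAut_star_eigenvectorUnitary
  rwa [Unitary.conjStarAlgAut_apply, Unitary.coe_star, star_star, hstar] at h

theorem commute_add_transpose_of_transpose_mul_self_eq_one {R : Type*} [CommRing R]
    {B : Matrix m m R} (hB : Bᵀ * B = 1) : Commute B (B + Bᵀ) := by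
  rw [Commute, SemiconjBy, mul_add, add_mul, hB, mul_eq_one_comm.1 hB]

theorem apply_eq_zero_of_commute_diagonal {R : Type*} [CommRing R] [NoZeroDivisors R]
    {M : Matrix m m R} {v : m → R} (h : Commute M (diagonal v)) {i j : m} (hij : v i ≠ v j) :
    M i j = 0 := by
  have := congrFun (congrFun h.eq i) j
  rw [mul_diagonal, diagonal_mul, mul_comm] at this
  exact (mul_eq_mul_right_iff.1 this).resolve_left (Ne.symm hij)

theorem exists_skew_exp_eq_of_add_transpose_eq_diagonal {B : Matrix m m ℝ} (hB : Bᵀ * B = 1)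
    (hdet : B.det = 1) {v : m → ℝ} (hv : B + Bᵀ = diagonal v) :
    ∃ A : Matrix m m ℝ, Aᵀ = -A ∧ exp A = B := by
  classical
  let f := Set.rangeFactorization v
  have hblock : ∀ i j, f i ≠ f j → B i j = 0 := fun i j hij =>
    apply_eq_zero_of_commute_diagonal
      (hv ▸ commute_add_transpose_of_transpose_mul_self_eq_one hB) fun h => hij (Subtype.ext h)
  have horth : ∀ b, (B.toSquareBlock f b)ᵀ * B.toSquareBlock f b = 1 := fun b => by
    rw [← toSquareBlock_one (f := f) b, ← hB,
      toSquareBlock_mul (M := Bᵀ) fun i j hij => hblock j i (Ne.symm hij)]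
    rfl
  have hsum : ∀ b : Set.range v,
      B.toSquareBlock f b + (B.toSquareBlock f b)ᵀ = (b : ℝ) • 1 := by
    intro b
    ext i j
    have := congrFun (congrFun hv i) j
    have hi : v i = b := congrArg Subtype.val i.2
    simp only [add_apply, transpose_apply, diagonal_apply, hi] at this
    simp [toSquareBlock_def, this, one_apply, Subtype.ext_iff]
  have hpos : ∀ b : Set.range v, (b : ℝ) ≠ -2 → 0 < (B.toSquareBlock f b).det := by
    intro b hb
    obtain ⟨A, -, hA⟩ :=
      exists_skew_exp_eq_of_add_transpose_eq_smul_one (horth b) (hsum b) (.inl hb)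
    exact hA ▸ det_exp_pos A
  have heven : ∀ b : Set.range v, (b : ℝ) = -2 → Even (Fintype.card {i // f i = b}) := by
    intro b hb
    have hdetb := BlockTriangular.det_toSquareBlock_pos (fun i j hij => hblock i j hij.ne')
      (hdet ▸ one_pos) fun b' hb' => hpos b' fun h => hb' (Subtype.ext (h.trans hb.symm))
    rw [eq_neg_one_of_add_transpose_eq_neg_two (horth b) (hb ▸ hsum b), det_neg, det_one,
      mul_one] at hdetb
    rcases Nat.even_or_odd (Fintype.card {i // f i = b}) with h | h
    · exact h
    · rw [h.neg_one_pow] at hdetb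
      norm_num at hdetb
  exact exists_skew_exp_eq_of_toSquareBlock hblock fun b =>
    exists_skew_exp_eq_of_add_transpose_eq_smul_one (horth b) (hsum b)
      ((ne_or_eq _ _).imp_right (heven b))

theorem exists_skew_exp_eq_of_transpose_mul_mul {U B : Matrix m m ℝ} (hU : Uᵀ * U = 1)
    (h : ∃ A : Matrix m m ℝ, Aᵀ = -A ∧ exp A = Uᵀ * B * U) :
    ∃ A : Matrix m m ℝ, Aᵀ = -A ∧ exp A = B := by
  obtain ⟨A, hA, hexp⟩ := h
  have hUinv : U⁻¹ = Uᵀ := inv_eq_left_inv hU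
  have hUU : U * Uᵀ = 1 := mul_eq_one_comm.1 hU
  refine ⟨U * A * Uᵀ, ?_, ?_⟩
  · rw [transpose_mul, transpose_mul, transpose_transpose, hA, Matrix.neg_mul, Matrix.mul_neg,
      Matrix.mul_assoc]
  · rw [← hUinv, exp_conj _ _ ⟨⟨U, Uᵀ, hUU, hU⟩, rfl⟩, hUinv, hexp]
    simp only [← Matrix.mul_assoc, hUU, Matrix.one_mul]
    rw [Matrix.mul_assoc, hUU, Matrix.mul_one]

end Orthogonal

end Matrix

/-- The matrix exponential from skew-symmetric matrices onto SO(n) is surjective. -/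
theorem stmt_2 (n : ℕ) (B : Matrix (Fin n) (Fin n) ℝ)
    (hB : Bᵀ * B = 1) (hdet : B.det = 1) :
    ∃ A : Matrix (Fin n) (Fin n) ℝ, Aᵀ = -A ∧ exp A = B := by
  obtain ⟨U, hU, v, hv⟩ := (isSymm_add_transpose_self B).exists_transpose_mul_mul_eq_diagonal
  have hUU : U * Uᵀ = 1 := mul_eq_one_comm.1 hU
  have horth : (Uᵀ * B * U)ᵀ * (Uᵀ * B * U) = 1 := by
    simp only [transpose_mul, transpose_transpose, Matrix.mul_assoc]
    rw [← Matrix.mul_assoc U, hUU, Matrix.one_mul, ← Matrix.mul_assoc Bᵀ, hB, Matrix.one_mul,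
      hU]
  have hdet' : (Uᵀ * B * U).det = 1 := by
    rw [det_mul, det_mul, mul_right_comm, ← det_mul, hU, det_one, one_mul, hdet]
  have hsum : Uᵀ * B * U + (Uᵀ * B * U)ᵀ = diagonal v := by
    rw [← hv]
    simp only [transpose_mul, transpose_transpose, Matrix.mul_add, Matrix.add_mul,
      Matrix.mul_assoc]
  exact exists_skew_exp_eq_of_transpose_mul_mul hU
    (exists_skew_exp_eq_of_add_transpose_eq_diagonal horth hdet' hsum)
end

section
/- For matrices X and Y in the Lie algebra of a matrix Lie group, the differential of the matrix exponential satisfies (d exp)_X(Y) = e^X · Σ_{k≥0} (-ad_X)^k(Y)/(k+1)!, where ad_X(Y) = XY - YX. -/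
/-!
Differentiating the exponential series term by term gives
`(d exp)_X Y = ∑ₘ ((m+1)!)⁻¹ ∑_{i ≤ m} X^(m-i) Y X^i`. Right multiplication by `X` is
`L + S` with `L = mulLeft X` and `S = -ad_X` commuting, so the hockey-stick identity rewrites
the inner sum as `∑_{k ≤ m} C(m+1, k+1) X^(m-k) S^k Y`; since
`C(m+1, k+1) / (m+1)! = 1 / ((m-k)! (k+1)!)`, this is the `m`-th coefficient of the Cauchy
product of `exp X = ∑ X^a / a!` with `∑ S^k Y / (k+1)!`.
-/

open Matrix NormedSpace

attribute [local instance] Matrix.linftyOpNormedAddCommGroup Matrix.linftyOpNormedRing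
  Matrix.linftyOpNormedAlgebra

open Finset
open scoped Nat RightActions

theorem Commute.sum_pow_mul_add_pow_eq_sum_choose {R : Type*} [Semiring R] {u w : R}
    (h : Commute u w) (m : ℕ) :
    ∑ j ∈ range (m + 1), u ^ (m - j) * (u + w) ^ j =
      ∑ k ∈ range (m + 1), (m + 1).choose (k + 1) • (u ^ (m - k) * w ^ k) := by
  have hterm : ∀ j ∈ range (m + 1), u ^ (m - j) * (u + w) ^ j =
      ∑ k ∈ Ico 0 (j + 1), j.choose k • (u ^ (m - k) * w ^ k) := by
    intro j hj
    rw [add_comm, h.symm.add_pow, mul_sum, ← range_eq_Ico]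
    refine sum_congr rfl fun k hk => ?_
    have hkj : k ≤ j := Nat.lt_succ_iff.mp (mem_range.mp hk)
    have hjm : j ≤ m := Nat.lt_succ_iff.mp (mem_range.mp hj)
    rw [← Nat.cast_comm, ← nsmul_eq_mul, mul_smul_comm, (h.pow_pow _ _).symm.eq,
      ← mul_assoc, ← pow_add, show m - j + (j - k) = m - k by omega]
  rw [sum_congr rfl hterm, range_eq_Ico, ← sum_Ico_Ico_comm]
  refine sum_congr rfl fun k _ => ?_
  rw [← sum_smul, ← Nat.sum_Icc_choose, Ico_add_one_right_eq_Icc]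

theorem factorial_inv_mul_factorial_succ_inv {F : Type*} [Field F] [CharZero F] (a k : ℕ) :
    (a !⁻¹ : F) * ((k + 1)!⁻¹ : F) = ((a + k + 1)!⁻¹ : F) * (a + k + 1).choose (k + 1) := by
  have h : ((a + k + 1).choose (k + 1) : F) * a ! * (k + 1)! = (a + k + 1)! := by
    exact_mod_cast add_assoc a k 1 ▸ Nat.add_choose_mul_factorial_mul_factorial a (k + 1)
  have hchoose : ((a + k + 1).choose (k + 1) : F) ≠ 0 :=
    Nat.cast_ne_zero.mpr (Nat.choose_pos (by omega)).ne'
  rw [← h]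
  field_simp

theorem Module.End.norm_pow_apply_le {R E : Type*} [Semiring R] [SeminormedAddCommGroup E]
    [Module R E] (f : Module.End R E) {c : ℝ} (hc : 0 ≤ c) (hf : ∀ z, ‖f z‖ ≤ c * ‖z‖)
    (k : ℕ) (z : E) : ‖(f ^ k) z‖ ≤ c ^ k * ‖z‖ := by
  induction k with
  | zero => simp
  | succ k ih =>
    rw [pow_succ', Module.End.mul_apply, pow_succ', mul_assoc]
    exact (hf _).trans (mul_le_mul_of_nonneg_left ih hc)

theorem summable_factorial_inv_mul_mul_pow_pred (r : ℝ) :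
    Summable fun m : ℕ => (m !⁻¹ : ℝ) * (m * r ^ m.pred) := by
  rw [← summable_nat_add_iff 1]
  refine (Real.summable_pow_div_factorial r).congr fun m => ?_
  rw [Nat.factorial_succ]
  push_cast
  field_simp
  simp

section

variable {𝕂 A : Type*} [RCLike 𝕂] [NormedRing A] [NormedAlgebra 𝕂 A]

theorem norm_pow_mul_mul_pow_le (x y : A) (i j : ℕ) :
    ‖x ^ i * y * x ^ j‖ ≤ ‖x‖ ^ (i + j) * ‖y‖ := by
  have hL := Module.End.norm_pow_apply_le (LinearMap.mulLeft ℤ x) (norm_nonneg x)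
    (norm_mul_le x) i
  have hR := Module.End.norm_pow_apply_le (LinearMap.mulRight ℤ x) (norm_nonneg x)
    (fun z => (norm_mul_le z x).trans_eq (mul_comm _ _)) j
  simp only [LinearMap.pow_mulLeft, LinearMap.pow_mulRight, LinearMap.mulLeft_apply,
    LinearMap.mulRight_apply] at hL hR
  calc ‖x ^ i * y * x ^ j‖ ≤ ‖x‖ ^ i * ‖y * x ^ j‖ := by rw [mul_assoc]; exact hL _
    _ ≤ ‖x‖ ^ i * (‖x‖ ^ j * ‖y‖) := by gcongr; exact hR y
    _ = ‖x‖ ^ (i + j) * ‖y‖ := by ring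

theorem norm_sum_pow_mul_mul_pow_le (x y : A) (m : ℕ) :
    ‖∑ i ∈ range m, x ^ (m.pred - i) * y * x ^ i‖ ≤ m * (‖x‖ ^ m.pred * ‖y‖) := by
  calc ‖∑ i ∈ range m, x ^ (m.pred - i) * y * x ^ i‖
      ≤ ∑ i ∈ range m, ‖x‖ ^ m.pred * ‖y‖ := by
        refine norm_sum_le_of_le _ fun i hi => ?_
        have := norm_pow_mul_mul_pow_le x y (m.pred - i) i
        rwa [Nat.sub_add_cancel (by rw [Nat.pred_eq_sub_one]; simp at hi; omega)] at this
    _ = m * (‖x‖ ^ m.pred * ‖y‖) := by simp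

theorem sum_pow_mul_mul_pow_eq_sum_choose (x y : A) (m : ℕ) :
    ∑ i ∈ range (m + 1), x ^ (m - i) * y * x ^ i =
      ∑ k ∈ range (m + 1), (m + 1).choose (k + 1) •
        (x ^ (m - k) * ((-(LinearMap.mulLeft 𝕂 x - LinearMap.mulRight 𝕂 x)) ^ k) y) := by
  have hcomm : Commute (LinearMap.mulLeft 𝕂 x)
      (-(LinearMap.mulLeft 𝕂 x - LinearMap.mulRight 𝕂 x)) :=
    ((Commute.refl _).sub_right (LinearMap.commute_mulLeft_right x x)).neg_right
  have hright : LinearMap.mulLeft 𝕂 x + -(LinearMap.mulLeft 𝕂 x - LinearMap.mulRight 𝕂 x) =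
      LinearMap.mulRight 𝕂 x := by
    abel
  have h := congr($(hcomm.sum_pow_mul_add_pow_eq_sum_choose m) y)
  simpa only [hright, LinearMap.pow_mulLeft, LinearMap.pow_mulRight, LinearMap.sum_apply,
    Module.End.mul_apply, LinearMap.smul_apply, LinearMap.mulLeft_apply,
    LinearMap.mulRight_apply, mul_assoc] using h

theorem summable_norm_factorial_succ_inv_smul_pow_apply (x y : A) :
    Summable fun k : ℕ =>
      ‖((k + 1)!⁻¹ : 𝕂) • ((-(LinearMap.mulLeft 𝕂 x - LinearMap.mulRight 𝕂 x)) ^ k) y‖ := by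
  have hbound : ∀ z : A, ‖(-(LinearMap.mulLeft 𝕂 x - LinearMap.mulRight 𝕂 x)) z‖ ≤
      2 * ‖x‖ * ‖z‖ := fun z => by
    simp only [LinearMap.neg_apply, LinearMap.sub_apply, LinearMap.mulLeft_apply,
      LinearMap.mulRight_apply, norm_neg]
    calc ‖x * z - z * x‖ ≤ ‖x‖ * ‖z‖ + ‖z‖ * ‖x‖ :=
          (norm_sub_le _ _).trans (add_le_add (norm_mul_le _ _) (norm_mul_le _ _))
      _ = 2 * ‖x‖ * ‖z‖ := by ring
  refine Summable.of_nonneg_of_le (fun _ => norm_nonneg _) (fun k => ?_)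
    ((Real.summable_pow_div_factorial (2 * ‖x‖)).mul_right ‖y‖)
  rw [norm_smul, norm_inv, RCLike.norm_natCast, div_eq_inv_mul, mul_assoc]
  gcongr
  · exact Nat.le_succ k
  · exact Module.End.norm_pow_apply_le _ (by positivity) hbound k y

variable (𝕂) in
/-- The derivative of `x ↦ x ^ m / m!`, in the form given by `hasFDerivAt_pow'`. -/
noncomputable def expSeriesTermFDeriv (x : A) (m : ℕ) : A →L[𝕂] A :=
  (m !⁻¹ : 𝕂) • ∑ i ∈ range m, x ^ (m.pred - i) •> ContinuousLinearMap.id 𝕂 A <• x ^ i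

theorem expSeriesTermFDeriv_apply (x y : A) (m : ℕ) :
    expSeriesTermFDeriv 𝕂 x m y =
      (m !⁻¹ : 𝕂) • ∑ i ∈ range m, x ^ (m.pred - i) * y * x ^ i := by
  simp [expSeriesTermFDeriv]

theorem expSeriesTermFDeriv_zero (x : A) : expSeriesTermFDeriv 𝕂 x 0 = 0 := by
  simp [expSeriesTermFDeriv]

theorem norm_expSeriesTermFDeriv_le (x : A) (m : ℕ) :
    ‖expSeriesTermFDeriv 𝕂 x m‖ ≤ (m !⁻¹ : ℝ) * (m * ‖x‖ ^ m.pred) := by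
  refine ContinuousLinearMap.opNorm_le_bound _ (by positivity) fun y => ?_
  rw [expSeriesTermFDeriv_apply, norm_smul, norm_inv, RCLike.norm_natCast, mul_assoc, mul_assoc]
  gcongr
  exact norm_sum_pow_mul_mul_pow_le x y m

variable (𝕂) in
theorem hasFDerivAt_exp_tsum_expSeriesTermFDeriv [CompleteSpace A] (x : A) :
    HasFDerivAt exp (∑' m, expSeriesTermFDeriv 𝕂 x m) x := by
  have hterm : ∀ m y, HasFDerivAt (fun z : A => (m !⁻¹ : 𝕂) • z ^ m)
      (expSeriesTermFDeriv 𝕂 y m) y := fun m y =>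
    (hasFDerivAt_pow' (𝕜 := 𝕂) m (x := y)).const_smul (m !⁻¹ : 𝕂)
  let _ : NormedSpace ℝ A := NormedSpace.restrictScalars ℝ 𝕂 A
  rw [exp_eq_tsum 𝕂]
  refine hasFDerivAt_tsum_of_isPreconnected (f := fun m z => (m !⁻¹ : 𝕂) • z ^ m)
    (summable_factorial_inv_mul_mul_pow_pred (‖x‖ + 1)) Metric.isOpen_ball
    (convex_ball 0 _).isPreconnected (fun m y _ => hterm m y) (fun m y hy => ?_)
    (Metric.mem_ball_self (by positivity : (0 : ℝ) < ‖x‖ + 1))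
    (expSeries_summable' (𝕂 := 𝕂) (0 : A)) (by simp : x ∈ Metric.ball (0 : A) (‖x‖ + 1))
  rw [mem_ball_zero_iff] at hy
  refine (norm_expSeriesTermFDeriv_le y m).trans ?_
  gcongr

theorem expSeriesTermFDeriv_succ_apply (x y : A) (m : ℕ) :
    expSeriesTermFDeriv 𝕂 x (m + 1) y = ∑ kl ∈ antidiagonal m, (kl.1 !⁻¹ : 𝕂) • x ^ kl.1 *
      ((kl.2 + 1)!⁻¹ : 𝕂) • ((-(LinearMap.mulLeft 𝕂 x - LinearMap.mulRight 𝕂 x)) ^ kl.2) y := by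
  rw [expSeriesTermFDeriv_apply, Nat.pred_succ, sum_pow_mul_mul_pow_eq_sum_choose (𝕂 := 𝕂),
    smul_sum, ← Nat.sum_antidiagonal_swap]
  simp only [Prod.fst_swap, Prod.snd_swap]
  rw [Nat.sum_antidiagonal_eq_sum_range_succ (fun k a => (a !⁻¹ : 𝕂) • x ^ a *
      ((k + 1)!⁻¹ : 𝕂) • ((-(LinearMap.mulLeft 𝕂 x - LinearMap.mulRight 𝕂 x)) ^ k) y)]
  refine sum_congr rfl fun k hk => ?_
  have hkm : m - k + k = m := Nat.sub_add_cancel (Nat.lt_succ_iff.mp (mem_range.mp hk))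
  rw [smul_mul_smul_comm, ← Nat.cast_smul_eq_nsmul 𝕂, smul_smul,
    factorial_inv_mul_factorial_succ_inv, hkm]

theorem tsum_expSeriesTermFDeriv_apply [CompleteSpace A] (x y : A) :
    (∑' m, expSeriesTermFDeriv 𝕂 x m) y = exp x * ∑' k : ℕ,
      ((k + 1)!⁻¹ : 𝕂) • ((-(LinearMap.mulLeft 𝕂 x - LinearMap.mulRight 𝕂 x)) ^ k) y := by
  have hsummable : Summable fun m => expSeriesTermFDeriv 𝕂 x m :=
    .of_norm_bounded (summable_factorial_inv_mul_mul_pow_pred ‖x‖) (norm_expSeriesTermFDeriv_le x)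
  have happly := (ContinuousLinearMap.apply 𝕂 A y).map_tsum hsummable
  have hsummable_apply : Summable fun m => expSeriesTermFDeriv 𝕂 x m y := by
    simpa using hsummable.mapL (ContinuousLinearMap.apply 𝕂 A y)
  simp only [ContinuousLinearMap.apply_apply] at happly
  rw [happly, exp_eq_tsum 𝕂,
    tsum_mul_tsum_eq_tsum_sum_antidiagonal_of_summable_norm (norm_expSeries_summable' (𝕂 := 𝕂) x)
      (summable_norm_factorial_succ_inv_smul_pow_apply x y),
    hsummable_apply.tsum_eq_zero_add]
  simp only [expSeriesTermFDeriv_succ_apply, expSeriesTermFDeriv_zero,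
    _root_.zero_apply, zero_add]

end

/-- The differential of the matrix exponential satisfies
`(d exp)_X (Y) = e^X * ∑_{k ≥ 0} (-ad_X)^k (Y) / (k+1)!` where `ad_X Y = XY - YX`. -/
theorem stmt_16 (n : ℕ) (X : Matrix (Fin n) (Fin n) ℂ) :
    ∃ L : Matrix (Fin n) (Fin n) ℂ →L[ℂ] Matrix (Fin n) (Fin n) ℂ,
      HasFDerivAt exp L X ∧
      ∀ Y : Matrix (Fin n) (Fin n) ℂ,
        L Y = exp X *
          ∑' k : ℕ, (((k + 1).factorial : ℂ))⁻¹ •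
            (((-(LinearMap.mulLeft ℂ X - LinearMap.mulRight ℂ X)) ^ k) Y) :=
  ⟨_, hasFDerivAt_exp_tsum_expSeriesTermFDeriv ℂ X, tsum_expSeriesTermFDeriv_apply X⟩
end
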